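/- Let C be a regular, irreducible curve that is projective over a field k, with function field F = k(C), arithmetic genus t ≥ 1, and a k-rational point O, and let S = { P in C : RR_{3t}((P)) ≠ {0} }. Suppose the closed point P is not in S, that d = deg(P) satisfies 2t + 1 ≤ d ≤ 3t, that a_1^+ and a_2^+ are nonzero elements of RR_{2t−1}, and that a_1^− is a nonzero element of RR_{3t}. Then there exist nonzero b^+, b^− in RR_{3t} and g in RR_{3t} satisfying a_1^− b^+ − a_1^+ a_2^+ b^− − f_P f_P' g = 0; in particular, {f_P, a_1^+} + {f_P, a_2^+} − {f_P, a_1^−} ≡ {f_P, b^+} − {f_P, b^−} modulo L_{3t} in K₂(F). -/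

import Mathlib

/-! Since `dim RR_{3t} = 2t + 1` while the products `a₁⁻ b`, `a₁⁺ a₂⁺ b`, `f_P f_P' b` with
`b ∈ RR_{3t}` all lie in `RR_{7t}`, of dimension `6t + 1`, the map
`(b⁺, b⁻, g) ↦ a₁⁻ b⁺ - a₁⁺ a₂⁺ b⁻ - f_P f_P' g` has a nonzero kernel. Nonzero elements of
`RR_{3t}` do not vanish at `P` (as `P ∉ S`) while `f_P f_P'` does, so comparing orders at `P`
forces `b⁺ ≠ 0` and `b⁻ ≠ 0`. With `u = a₁⁺ a₂⁺ b⁻ / (a₁⁻ b⁺)` the left-hand side of the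
congruence is `{f_P, u}`, and the relation reads `f_P · f_P' g / (a₁⁻ b⁺) + u = 1`, so the
Steinberg relation writes `{f_P, u}` as a sum of symbols in the subgroup generated by the
units of `RR_{3t}`. -/

open scoped TensorProduct

noncomputable section

/-- The set of Steinberg relations in `Fˣ ⊗_ℤ Fˣ` (written additively):
the elements `a ⊗ b` with `a + b = 1` in `F`. -/
def SteinbergSet (F : Type*) [Field F] :
    Set (TensorProduct ℤ (Additive Fˣ) (Additive Fˣ)) :=
  { x | ∃ a b : Fˣ, (a : F) + (b : F) = 1 ∧
      x = Additive.ofMul a ⊗ₜ[ℤ] Additive.ofMul b }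

/-- Milnor's `K₂` of a field, via Matsumoto's presentation. -/
abbrev K2 (F : Type*) [Field F] :=
  (TensorProduct ℤ (Additive Fˣ) (Additive Fˣ)) ⧸
    Submodule.span ℤ (SteinbergSet F)

/-- The symbol `{f, g}` in `K₂(F)`. -/
def symbol {F : Type*} [Field F] (f g : Fˣ) : K2 F :=
  Submodule.Quotient.mk (Additive.ofMul f ⊗ₜ[ℤ] Additive.ofMul g)

/-- The degree of a divisor `D` on the curve: `∑_P deg(P) · D(P)`,
where `deg P = [k(P) : k]`. -/
def divDeg (k : Type*) [Field k] {Pt : Type*} (res : Pt → Type*)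
    [∀ P, Field (res P)] [∀ P, Algebra k (res P)] (D : Pt →₀ ℤ) : ℤ :=
  ∑ᶠ P, (Module.finrank k (res P) : ℤ) * D P

/-- Axioms for a regular, irreducible curve `C`, projective over a field `k`, with
`H⁰(C, O_C) = k`, presented through: its function field `F = k(C)`, its set `Pt` of
closed points, the residue fields `res P = k(P)`, the normalized valuations `ord P`,
the evaluation maps `ev P` (evaluation at `P` of functions regular at `P`), the
Riemann-Roch spaces `L D = H⁰(C, O_C(D))`, and the arithmetic genus
`t = dim_k H¹(C, O_C)`, characterized by the Riemann-Roch relations. -/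
structure IsProjCurve (k F : Type*) [Field k] [Field F] [Algebra k F]
    {Pt : Type*} (res : Pt → Type*) [∀ P, Field (res P)] [∀ P, Algebra k (res P)]
    (ord : Pt → F → ℤ) (ev : ∀ P, F → res P)
    (L : (Pt →₀ ℤ) → Submodule k F) (t : ℕ) : Prop where
  finiteDimensional_res : ∀ P, FiniteDimensional k (res P)
  ord_mul : ∀ P (f g : F), f ≠ 0 → g ≠ 0 → ord P (f * g) = ord P f + ord P g
  ord_add : ∀ P (f g : F), f ≠ 0 → g ≠ 0 → f + g ≠ 0 →
      min (ord P f) (ord P g) ≤ ord P (f + g)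
  ord_algebraMap : ∀ P (c : k), c ≠ 0 → ord P (algebraMap k F c) = 0
  ord_uniformizer : ∀ P, ∃ f : F, f ≠ 0 ∧ ord P f = 1
  ord_separates : ∀ P Q, (∀ f : F, ord P f = ord Q f) → P = Q
  support_finite : ∀ f : F, f ≠ 0 → {P | ord P f ≠ 0}.Finite
  degree_formula : ∀ f : F, f ≠ 0 →
      ∑ᶠ P, (Module.finrank k (res P) : ℤ) * ord P f = 0
  ev_zero : ∀ P, ev P 0 = 0
  ev_one : ∀ P, ev P 1 = 1
  ev_add : ∀ P (f g : F), f ≠ 0 → g ≠ 0 → 0 ≤ ord P f → 0 ≤ ord P g →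
      ev P (f + g) = ev P f + ev P g
  ev_mul : ∀ P (f g : F), f ≠ 0 → g ≠ 0 → 0 ≤ ord P f → 0 ≤ ord P g →
      ev P (f * g) = ev P f * ev P g
  ev_algebraMap : ∀ P (c : k), ev P (algebraMap k F c) = algebraMap k (res P) c
  ev_eq_zero_iff : ∀ P (f : F), f ≠ 0 → 0 ≤ ord P f → (ev P f = 0 ↔ 0 < ord P f)
  ev_surjective : ∀ P (y : res P), ∃ f : F, f ≠ 0 ∧ 0 ≤ ord P f ∧ ev P f = y
  mem_L : ∀ (D : Pt →₀ ℤ) (f : F), f ∈ L D ↔ (f ≠ 0 → ∀ P, 0 ≤ D P + ord P f)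
  finiteDimensional_L : ∀ D, FiniteDimensional k (L D)
  global_sections : ∀ f : F, f ∈ L 0 ↔ ∃ c : k, algebraMap k F c = f
  rr_ineq : ∀ D : Pt →₀ ℤ,
      divDeg k res D + 1 - t ≤ (Module.finrank k (L D) : ℤ)
  rr_eq : ∀ D : Pt →₀ ℤ, 2 * (t : ℤ) - 2 < divDeg k res D →
      (Module.finrank k (L D) : ℤ) = divDeg k res D + 1 - t

/-- `T` is the tame symbol `K₂(F) → ∐_{P} k(P)^*`: it is determined by
`T_P({f,g}) = (-1)^{ord_P(f)·ord_P(g)} (f^{ord_P(g)} / g^{ord_P(f)})(P)`. -/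
def IsTameSymbol {F : Type*} [Field F] {Pt : Type*} {res : Pt → Type*}
    [∀ P, Field (res P)]
    (ord : Pt → F → ℤ) (ev : ∀ P, F → res P)
    (T : K2 F →+ Π₀ P : Pt, Additive ((res P)ˣ)) : Prop :=
  ∀ (f g : Fˣ) (P : Pt),
    ((Additive.toMul (T (symbol f g) P) : (res P)ˣ) : res P) =
      ev P (((-1 : Fˣ) ^ (ord P (f : F) * ord P (g : F)) *
        f ^ (ord P (g : F)) * g ^ (-ord P (f : F)) : Fˣ) : F)

/-- `L_d`: the subgroup of `K₂(F)` generated by the symbols `{l, m}` with `l, m`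
nonzero elements of the Riemann-Roch space `H⁰(C, O_C(d(O)))`. -/
def Lsub {k F : Type*} [Field k] [Field F] [Algebra k F] {Pt : Type*}
    (L : (Pt →₀ ℤ) → Submodule k F) (O : Pt) (d : ℤ) : AddSubgroup (K2 F) :=
  AddSubgroup.closure
    { x | ∃ l m : Fˣ, (l : F) ∈ L (Finsupp.single O d) ∧
        (m : F) ∈ L (Finsupp.single O d) ∧ x = symbol l m }

open Module

section Symbol

variable {F : Type*} [Field F]

lemma symbol_mul_left (f g h : Fˣ) : symbol (f * g) h = symbol f h + symbol g h := by
  rw [symbol, ofMul_mul, TensorProduct.add_tmul, Submodule.Quotient.mk_add]; rfl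

lemma symbol_mul_right (f g h : Fˣ) : symbol f (g * h) = symbol f g + symbol f h := by
  rw [symbol, ofMul_mul, TensorProduct.tmul_add, Submodule.Quotient.mk_add]; rfl

lemma symbol_inv_left (f g : Fˣ) : symbol f⁻¹ g = -symbol f g := by
  rw [symbol, ofMul_inv, TensorProduct.neg_tmul, Submodule.Quotient.mk_neg]; rfl

lemma symbol_inv_right (f g : Fˣ) : symbol f g⁻¹ = -symbol f g := by
  rw [symbol, ofMul_inv, TensorProduct.tmul_neg, Submodule.Quotient.mk_neg]; rfl

lemma symbol_one_left (f : Fˣ) : symbol 1 f = 0 := by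
  simpa using symbol_mul_left 1 1 f

lemma symbol_one_right (f : Fˣ) : symbol f 1 = 0 := by
  simpa using symbol_mul_right f 1 1

lemma symbol_eq_zero_of_add_eq_one {a b : Fˣ} (h : (a : F) + b = 1) : symbol a b = 0 :=
  (Submodule.Quotient.mk_eq_zero _).mpr (Submodule.subset_span ⟨a, b, h, rfl⟩)

lemma symbol_mem_of_mul_add_eq_one {H : AddSubgroup (K2 F)} {G : Subgroup Fˣ}
    (hGH : ∀ x ∈ G, ∀ y ∈ G, symbol x y ∈ H) {f y u : Fˣ} (hy : y ∈ G) (hu : u ∈ G)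
    (h : (f : F) * y + u = 1) : symbol f u ∈ H := by
  have hfyu : symbol (f * y) u = 0 := symbol_eq_zero_of_add_eq_one (by simpa using h)
  have : symbol f u = -symbol y u := by
    rwa [symbol_mul_left, add_eq_zero_iff_eq_neg] at hfyu
  rw [this]
  exact neg_mem (hGH y hy u hu)

end Symbol

section Lsub

variable {k F : Type*} [Field k] [Field F] [Algebra k F] {Pt : Type*}
  (L : (Pt →₀ ℤ) → Submodule k F) (O : Pt) (n : ℤ)

lemma symbol_mem_Lsub_of_mem_closure {x y : Fˣ}
    (hx : x ∈ Subgroup.closure {u : Fˣ | (u : F) ∈ L (Finsupp.single O n)})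
    (hy : y ∈ Subgroup.closure {u : Fˣ | (u : F) ∈ L (Finsupp.single O n)}) :
    symbol x y ∈ Lsub L O n := by
  induction hx, hy using Subgroup.closure_induction₂ with
  | mem x y hx hy => exact AddSubgroup.subset_closure ⟨x, y, hx, hy, rfl⟩
  | one_left x _ => simp [symbol_one_left]
  | one_right x _ => simp [symbol_one_right]
  | mul_left x y z _ _ _ hxz hyz => rw [symbol_mul_left]; exact add_mem hxz hyz
  | mul_right y z x _ _ _ hxy hxz => rw [symbol_mul_right]; exact add_mem hxy hxz
  | inv_left x y _ _ hxy => rw [symbol_inv_left]; exact neg_mem hxy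
  | inv_right x y _ _ hxy => rw [symbol_inv_right]; exact neg_mem hxy

lemma symbol_sub_mem_Lsub_of_mul_sub_mul_sub_mul_eq_zero {f f' a₁ a₂ a₃ b b' : Fˣ} {g : F}
    (hf' : (f' : F) ∈ L (Finsupp.single O n)) (ha₁ : (a₁ : F) ∈ L (Finsupp.single O n))
    (ha₂ : (a₂ : F) ∈ L (Finsupp.single O n)) (ha₃ : (a₃ : F) ∈ L (Finsupp.single O n))
    (hb : (b : F) ∈ L (Finsupp.single O n)) (hb' : (b' : F) ∈ L (Finsupp.single O n))
    (hg : g ∈ L (Finsupp.single O n))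
    (h : (a₃ : F) * b - a₁ * a₂ * b' - f * f' * g = 0) :
    symbol f a₁ + symbol f a₂ - symbol f a₃ - (symbol f b - symbol f b') ∈ Lsub L O n := by
  set G := Subgroup.closure {u : Fˣ | (u : F) ∈ L (Finsupp.single O n)}
  have mem_G {x : Fˣ} (hx : (x : F) ∈ L (Finsupp.single O n)) : x ∈ G :=
    Subgroup.subset_closure hx
  set u := a₁ * a₂ * b' * (a₃ * b)⁻¹
  have hu : u ∈ G :=
    mul_mem (mul_mem (mul_mem (mem_G ha₁) (mem_G ha₂)) (mem_G hb'))
      (inv_mem (mul_mem (mem_G ha₃) (mem_G hb)))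
  have hexpr : symbol f a₁ + symbol f a₂ - symbol f a₃ - (symbol f b - symbol f b') =
      symbol f u := by
    simp only [u, symbol_mul_right, symbol_inv_right]
    abel
  rw [hexpr]
  have hab : (a₃ : F) * b ≠ 0 := mul_ne_zero a₃.ne_zero b.ne_zero
  rcases eq_or_ne g 0 with rfl | hg0
  · have hu1 : u = 1 := by
      ext
      simp only [u, Units.val_mul, Units.val_inv_eq_inv_val, Units.val_one]
      field_simp
      linear_combination -h
    rw [hu1, symbol_one_right]
    exact zero_mem _
  · refine symbol_mem_of_mul_add_eq_one
      (fun x hx y hy => symbol_mem_Lsub_of_mem_closure L O n hx hy)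
      (y := f' * Units.mk0 g hg0 * (a₃ * b)⁻¹)
      (mul_mem (mul_mem (mem_G hf') (mem_G (by simpa using hg)))
        (inv_mem (mul_mem (mem_G ha₃) (mem_G hb)))) hu ?_
    simp only [u, Units.val_mul, Units.val_inv_eq_inv_val, Units.val_mk0]
    field_simp
    linear_combination -h

end Lsub

lemma exists_mul_add_mul_add_mul_eq_zero {k F : Type*} [Field k] [CommRing F] [Algebra k F]
    {M N : Submodule k F} [FiniteDimensional k N] (hMN : finrank k N < 3 * finrank k M)
    {c₁ c₂ c₃ : F} (hc₁ : ∀ b ∈ M, c₁ * b ∈ N) (hc₂ : ∀ b ∈ M, c₂ * b ∈ N)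
    (hc₃ : ∀ b ∈ M, c₃ * b ∈ N) :
    ∃ b₁ ∈ M, ∃ b₂ ∈ M, ∃ b₃ ∈ M,
      (b₁ ≠ 0 ∨ b₂ ≠ 0 ∨ b₃ ≠ 0) ∧ c₁ * b₁ + c₂ * b₂ + c₃ * b₃ = 0 := by
  have : FiniteDimensional k M := Module.finite_of_finrank_pos (by omega)
  let φ : M × M × M →ₗ[k] N :=
    ((LinearMap.mulLeft k c₁).restrict hc₁).coprod
      (((LinearMap.mulLeft k c₂).restrict hc₂).coprod ((LinearMap.mulLeft k c₃).restrict hc₃))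
  have hφ : ¬ Function.Injective φ := fun hinj => by
    have := LinearMap.finrank_le_finrank_of_injective hinj
    rw [Module.finrank_prod, Module.finrank_prod] at this
    omega
  obtain ⟨z, hz, hz0⟩ := (Submodule.ne_bot_iff _).mp (mt LinearMap.ker_eq_bot.mp hφ)
  refine ⟨z.1, z.1.2, z.2.1, z.2.1.2, z.2.2, z.2.2.2, ?_, ?_⟩
  · by_contra! h
    exact hz0 (Prod.ext (Subtype.ext h.1) (Prod.ext (Subtype.ext h.2.1) (Subtype.ext h.2.2)))
  · have hφz : c₁ * z.1 + (c₂ * z.2.1 + c₃ * z.2.2) = 0 :=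
      congrArg Subtype.val (LinearMap.mem_ker.mp hz)
    rwa [← add_assoc] at hφz

namespace IsProjCurve

variable {k F : Type*} [Field k] [Field F] [Algebra k F] {Pt : Type*} {res : Pt → Type*}
  [∀ P, Field (res P)] [∀ P, Algebra k (res P)] {ord : Pt → F → ℤ} {ev : ∀ P, F → res P}
  {L : (Pt →₀ ℤ) → Submodule k F} {t : ℕ}

lemma L_mono (hC : IsProjCurve k F res ord ev L t) {D D' : Pt →₀ ℤ} (h : D ≤ D') :
    L D ≤ L D' := by
  intro f hf
  rw [hC.mem_L] at hf ⊢
  exact fun hf0 Q => (hf hf0 Q).trans (by simpa using h Q)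

lemma L_single_mono (hC : IsProjCurve k F res ord ev L t) (O : Pt) {m n : ℤ} (h : m ≤ n) :
    L (Finsupp.single O m) ≤ L (Finsupp.single O n) :=
  hC.L_mono (Finsupp.single_le_single.mpr h)

lemma mul_mem_L (hC : IsProjCurve k F res ord ev L t) {D D' : Pt →₀ ℤ} {f g : F}
    (hf : f ∈ L D) (hg : g ∈ L D') : f * g ∈ L (D + D') := by
  rw [hC.mem_L] at hf hg ⊢
  intro hfg Q
  have hf0 := left_ne_zero_of_mul hfg
  have hg0 := right_ne_zero_of_mul hfg
  rw [hC.ord_mul Q f g hf0 hg0, Finsupp.add_apply]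
  linarith [hf hf0 Q, hg hg0 Q]

lemma mul_mem_L_single (hC : IsProjCurve k F res ord ev L t) {O : Pt} {m n : ℤ} {f g : F}
    (hf : f ∈ L (Finsupp.single O m)) (hg : g ∈ L (Finsupp.single O n)) :
    f * g ∈ L (Finsupp.single O (m + n)) := by
  rw [Finsupp.single_add]
  exact hC.mul_mem_L hf hg

lemma mem_L_single_of_ord_eq (hC : IsProjCurve k F res ord ev L t) {O : Pt} {E : Pt →₀ ℤ}
    (hE : 0 ≤ E) {a n : ℤ} (han : a ≤ n) {f : F}
    (hf : ∀ Q, ord Q f = (E - a • Finsupp.single O 1 : Pt →₀ ℤ) Q) :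
    f ∈ L (Finsupp.single O n) := by
  refine (hC.mem_L _ _).mpr fun _ Q => ?_
  have hEQ : 0 ≤ E Q := hE Q
  rw [hf Q, Finsupp.sub_apply, Finsupp.smul_apply, smul_eq_mul]
  rcases eq_or_ne Q O with rfl | hQO
  · simp only [Finsupp.single_eq_same]
    omega
  · simpa [Finsupp.single_eq_of_ne hQO] using hEQ

lemma finrank_L_single (hC : IsProjCurve k F res ord ev L t) {O : Pt}
    (hO : finrank k (res O) = 1) {n : ℤ} (hn : 2 * (t : ℤ) - 2 < n) :
    (finrank k (L (Finsupp.single O n)) : ℤ) = n + 1 - t := by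
  have hdeg : divDeg k res (Finsupp.single O n) = n := by
    rw [divDeg, finsum_eq_single _ O (fun Q hQ => by simp [Finsupp.single_eq_of_ne hQ]), hO]
    simp
  rw [hC.rr_eq _ (by rwa [hdeg]), hdeg]

lemma ord_neg (hC : IsProjCurve k F res ord ev L t) (P : Pt) (f : F) : ord P (-f) = ord P f := by
  rcases eq_or_ne f 0 with rfl | hf
  · rw [neg_zero]
  have hord1 : ord P (-1 : F) = 0 := by
    simpa using hC.ord_algebraMap P (-1) (neg_ne_zero.mpr one_ne_zero)
  rw [← neg_one_mul, hC.ord_mul P _ _ (neg_ne_zero.mpr one_ne_zero) hf, hord1, zero_add]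

lemma ord_eq_zero_of_mem_L_single (hC : IsProjCurve k F res ord ev L t) {O P : Pt}
    (hPO : P ≠ O) {n : ℤ} (hPS : L (Finsupp.single O n - Finsupp.single P 1) = ⊥) {f : F}
    (hf : f ∈ L (Finsupp.single O n)) (hf0 : f ≠ 0) : ord P f = 0 := by
  have hf' := (hC.mem_L _ f).mp hf hf0
  have hP := hf' P
  rw [Finsupp.single_eq_of_ne hPO, zero_add] at hP
  refine le_antisymm (not_lt.mp fun hpos => hf0 ?_) hP
  suffices f ∈ L (Finsupp.single O n - Finsupp.single P 1) by simpa [hPS] using this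
  rw [hC.mem_L]
  intro _ Q
  rcases eq_or_ne Q P with rfl | hQP
  · simp only [Finsupp.coe_sub, Pi.sub_apply, Finsupp.single_eq_of_ne hPO,
      Finsupp.single_eq_same]
    omega
  · simpa [Finsupp.single_eq_of_ne hQP] using hf' Q

lemma ne_zero_of_add_add_eq_zero (hC : IsProjCurve k F res ord ev L t) {P : Pt}
    {u₁ u₂ u₃ : F} (h : u₁ + u₂ + u₃ = 0) (h0 : u₁ ≠ 0 ∨ u₂ ≠ 0 ∨ u₃ ≠ 0)
    (h₁ : u₁ ≠ 0 → ord P u₁ = 0) (h₂ : u₂ ≠ 0 → ord P u₂ = 0)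
    (h₃ : u₃ ≠ 0 → 0 < ord P u₃) : u₁ ≠ 0 ∧ u₂ ≠ 0 := by
  have hpair {x y : F} (hxy : x + y = 0) (hx : x ≠ 0 → ord P x = 0)
      (hy : y ≠ 0 → 0 < ord P y) : x = 0 ∧ y = 0 := by
    by_cases hy0 : y = 0
    · exact ⟨by simpa [hy0] using hxy, hy0⟩
    have hx0 : x ≠ 0 := fun hx0 => hy0 (by simpa [hx0] using hxy)
    have hxy' := hC.ord_neg P y
    rw [← eq_neg_of_add_eq_zero_left hxy] at hxy'
    have := hx hx0
    have := hy hy0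
    omega
  refine ⟨fun hu₁ => ?_, fun hu₂ => ?_⟩
  · obtain ⟨hu₂, hu₃⟩ := hpair (by rwa [hu₁, zero_add] at h) h₂ h₃
    tauto
  · obtain ⟨hu₁, hu₃⟩ := hpair (by rwa [hu₂, add_zero] at h) h₁ h₃
    tauto

lemma exists_mul_sub_mul_sub_mul_eq_zero (hC : IsProjCurve k F res ord ev L t) {O P : Pt}
    (hO : finrank k (res O) = 1) (hPO : P ≠ O) {n m : ℤ} (hn : 2 * (t : ℤ) - 2 < n)
    (hm : 0 ≤ m) (hmn : m + 2 * t < 2 * n + 2)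
    (hPS : L (Finsupp.single O n - Finsupp.single P 1) = ⊥) {c₁ c₂ c₃ : Fˣ}
    (hc₁ : (c₁ : F) ∈ L (Finsupp.single O m)) (hc₂ : (c₂ : F) ∈ L (Finsupp.single O m))
    (hc₃ : (c₃ : F) ∈ L (Finsupp.single O m))
    (hc₁P : ord P c₁ = 0) (hc₂P : ord P c₂ = 0) (hc₃P : 0 < ord P c₃) :
    ∃ b₁ b₂ : Fˣ, (b₁ : F) ∈ L (Finsupp.single O n) ∧ (b₂ : F) ∈ L (Finsupp.single O n) ∧
      ∃ b₃ ∈ L (Finsupp.single O n), (c₁ : F) * b₁ - c₂ * b₂ - c₃ * b₃ = 0 := by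
  have := hC.finiteDimensional_L
  have hmul {c : F} (hc : c ∈ L (Finsupp.single O m)) :
      ∀ b ∈ L (Finsupp.single O n), c * b ∈ L (Finsupp.single O (m + n)) :=
    fun _ hb => hC.mul_mem_L_single hc hb
  obtain ⟨b₁, hb₁, b₂, hb₂, b₃, hb₃, hb0, hrel⟩ := exists_mul_add_mul_add_mul_eq_zero
    (by
      have hdim := hC.finrank_L_single hO (n := n) hn
      have hdim' := hC.finrank_L_single hO (n := m + n) (by omega)
      omega)
    (hmul hc₁) (hmul (neg_mem hc₂)) (hmul (neg_mem hc₃))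
  have hord0 {f : F} (hf : f ∈ L (Finsupp.single O n)) (hf0 : f ≠ 0) : ord P f = 0 :=
    hC.ord_eq_zero_of_mem_L_single hPO hPS hf hf0
  have hord_mul {c b : F} (h : c * b ≠ 0) : ord P (c * b) = ord P c + ord P b :=
    hC.ord_mul P c b (left_ne_zero_of_mul h) (right_ne_zero_of_mul h)
  obtain ⟨hu₁, hu₂⟩ := hC.ne_zero_of_add_add_eq_zero (P := P) hrel
    (by simpa using hb0)
    (fun h => by rw [hord_mul h, hc₁P, hord0 hb₁ (right_ne_zero_of_mul h), add_zero])
    (fun h => by rw [hord_mul h, hC.ord_neg, hc₂P, hord0 hb₂ (right_ne_zero_of_mul h), add_zero])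
    (fun h => by rw [hord_mul h, hC.ord_neg, hord0 hb₃ (right_ne_zero_of_mul h)]; omega)
  refine ⟨Units.mk0 b₁ (right_ne_zero_of_mul hu₁), Units.mk0 b₂ (right_ne_zero_of_mul hu₂),
    hb₁, hb₂, b₃, hb₃, ?_⟩
  simp only [Units.val_mk0]
  linear_combination hrel

end IsProjCurve

theorem statement18_general (k F : Type*) [Field k] [Field F] [Algebra k F]
    {Pt : Type*} (res : Pt → Type*) [∀ P, Field (res P)] [∀ P, Algebra k (res P)]
    (ord : Pt → F → ℤ) (ev : ∀ P, F → res P)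
    (L : (Pt →₀ ℤ) → Submodule k F) (t : ℕ)
    (hC : IsProjCurve k F res ord ev L t)
    (O : Pt) (hO : Module.finrank k (res O) = 1)
    (P : Pt)
    (hPS : L (Finsupp.single O (3 * t : ℤ) - Finsupp.single P 1) = ⊥)
    (d : ℕ) (hd : d = Module.finrank k (res P))
    (hd1 : 2 * t + 1 ≤ d) (hd2 : d ≤ 3 * t)
    (fP : Fˣ) (DP : Pt →₀ ℤ)
    (hDPeff : ∀ Q, 0 ≤ DP Q)
    (hfP : ∀ Q, ord Q (fP : F) =
      ((Finsupp.single P 1 - DP - ((d : ℤ) - t) • Finsupp.single O 1 : Pt →₀ ℤ)) Q)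
    (fP' : Fˣ) (DP' : Pt →₀ ℤ)
    (hDP'eff : ∀ Q, 0 ≤ DP' Q)
    (hfP' : ∀ Q, ord Q (fP' : F) =
      ((DP + DP' - (2 * (t : ℤ)) • Finsupp.single O 1 : Pt →₀ ℤ)) Q)
    (a1p a2p a1m : Fˣ)
    (ha1p : (a1p : F) ∈ L (Finsupp.single O (2 * (t : ℤ) - 1)))
    (ha2p : (a2p : F) ∈ L (Finsupp.single O (2 * (t : ℤ) - 1)))
    (ha1m : (a1m : F) ∈ L (Finsupp.single O (3 * t : ℤ))) :
    ∃ bp bm : Fˣ,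
      (bp : F) ∈ L (Finsupp.single O (3 * t : ℤ)) ∧
      (bm : F) ∈ L (Finsupp.single O (3 * t : ℤ)) ∧
      ∃ g ∈ L (Finsupp.single O (3 * t : ℤ)),
        (a1m : F) * bp - (a1p : F) * a2p * bm - (fP : F) * fP' * g = 0 ∧
        symbol fP a1p + symbol fP a2p - symbol fP a1m -
          (symbol fP bp - symbol fP bm) ∈ Lsub L O (3 * t : ℤ) := by
  have hPO : P ≠ O := by rintro rfl; omega
  have hL3 := hC.L_single_mono O (n := 3 * t) (m := 2 * t - 1) (by omega)
  have hord0 {f : F} (hf : f ∈ L (Finsupp.single O (3 * t : ℤ))) (hf0 : f ≠ 0) : ord P f = 0 :=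
    hC.ord_eq_zero_of_mem_L_single hPO hPS hf hf0
  have hfP'3 : (fP' : F) ∈ L (Finsupp.single O (3 * t : ℤ)) :=
    hC.mem_L_single_of_ord_eq (add_nonneg hDPeff hDP'eff) (a := 2 * t) (by omega) hfP'
  have hord_fPfP' (Q : Pt) : ord Q ((fP : F) * fP') =
      (Finsupp.single P 1 + DP' - ((d : ℤ) + t) • Finsupp.single O 1 : Pt →₀ ℤ) Q := by
    rw [hC.ord_mul Q _ _ fP.ne_zero fP'.ne_zero, hfP Q, hfP' Q]
    simp only [Finsupp.coe_sub, Finsupp.coe_add, Finsupp.coe_smul, Pi.sub_apply, Pi.add_apply,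
      Pi.smul_apply, smul_eq_mul]
    ring
  obtain ⟨bp, bm, hbp, hbm, g, hg, hrel⟩ := hC.exists_mul_sub_mul_sub_mul_eq_zero hO hPO
    (n := 3 * t) (m := 4 * t) (by omega) (by omega) (by omega) hPS
    (c₁ := a1m) (c₂ := a1p * a2p) (c₃ := fP * fP') (hC.L_single_mono O (by omega) ha1m)
    (hC.L_single_mono O (by omega) (hC.mul_mem_L_single ha1p ha2p))
    (hC.mem_L_single_of_ord_eq (add_nonneg (Finsupp.single_nonneg.mpr zero_le_one) hDP'eff)
      (a := d + t) (by omega) hord_fPfP')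
    (hord0 ha1m a1m.ne_zero)
    (by rw [Units.val_mul, hC.ord_mul P _ _ a1p.ne_zero a2p.ne_zero,
      hord0 (hL3 ha1p) a1p.ne_zero, hord0 (hL3 ha2p) a2p.ne_zero, add_zero])
    (by
      rw [Units.val_mul, hord_fPfP' P]
      simp only [Finsupp.coe_sub, Finsupp.coe_add, Pi.sub_apply, Pi.add_apply,
        Finsupp.smul_apply, smul_eq_mul, Finsupp.single_eq_same, Finsupp.single_eq_of_ne hPO]
      linarith [hDP'eff P])
  exact ⟨bp, bm, hbp, hbm, g, hg, hrel, symbol_sub_mem_Lsub_of_mul_sub_mul_sub_mul_eq_zero L O _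
    hfP'3 (hL3 ha1p) (hL3 ha2p) ha1m hbp hbm hg hrel⟩

/-- Lemma `3t3t3tlemma`.  Let `C` be a regular, irreducible curve,
projective over `k`, with function field `F`, arithmetic genus `t ≥ 1` and a
`k`-rational point `O`; let `S = {P : RR_{3t}((P)) ≠ 0}`.  Suppose `P ∉ S`,
`2t + 1 ≤ d = deg(P) ≤ 3t`, `a₁⁺, a₂⁺` are nonzero elements of `RR_{2t-1}` and `a₁⁻`
is a nonzero element of `RR_{3t}`.  Then there are nonzero `b⁺, b⁻` in `RR_{3t}` and
`g ∈ RR_{3t}` with `a₁⁻ b⁺ - a₁⁺ a₂⁺ b⁻ - f_P f_P' g = 0`; in particular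
`{f_P, a₁⁺} + {f_P, a₂⁺} - {f_P, a₁⁻} ≡ {f_P, b⁺} - {f_P, b⁻}` modulo `L_{3t}`. -/
theorem statement18 (k F : Type*) [Field k] [Field F] [Algebra k F]
    {Pt : Type*} (res : Pt → Type*) [∀ P, Field (res P)] [∀ P, Algebra k (res P)]
    (ord : Pt → F → ℤ) (ev : ∀ P, F → res P)
    (L : (Pt →₀ ℤ) → Submodule k F) (t : ℕ) (ht : 1 ≤ t)
    (hC : IsProjCurve k F res ord ev L t)
    (O : Pt) (hO : Module.finrank k (res O) = 1)
    (P : Pt)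
    (hPS : L (Finsupp.single O (3 * t : ℤ) - Finsupp.single P 1) = ⊥)
    (d : ℕ) (hd : d = Module.finrank k (res P))
    (hd1 : 2 * t + 1 ≤ d) (hd2 : d ≤ 3 * t)
    (fP : Fˣ) (DP : Pt →₀ ℤ)
    (hDPeff : ∀ Q, 0 ≤ DP Q) (hDPdeg : divDeg k res DP = t)
    (hfP : ∀ Q, ord Q (fP : F) =
      ((Finsupp.single P 1 - DP - ((d : ℤ) - t) • Finsupp.single O 1 : Pt →₀ ℤ)) Q)
    (fP' : Fˣ) (DP' : Pt →₀ ℤ)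
    (hDP'eff : ∀ Q, 0 ≤ DP' Q) (hDP'deg : divDeg k res DP' = t)
    (hfP' : ∀ Q, ord Q (fP' : F) =
      ((DP + DP' - (2 * (t : ℤ)) • Finsupp.single O 1 : Pt →₀ ℤ)) Q)
    (a1p a2p a1m : Fˣ)
    (ha1p : (a1p : F) ∈ L (Finsupp.single O (2 * (t : ℤ) - 1)))
    (ha2p : (a2p : F) ∈ L (Finsupp.single O (2 * (t : ℤ) - 1)))
    (ha1m : (a1m : F) ∈ L (Finsupp.single O (3 * t : ℤ))) :
    ∃ bp bm : Fˣ,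
      (bp : F) ∈ L (Finsupp.single O (3 * t : ℤ)) ∧
      (bm : F) ∈ L (Finsupp.single O (3 * t : ℤ)) ∧
      ∃ g ∈ L (Finsupp.single O (3 * t : ℤ)),
        (a1m : F) * bp - (a1p : F) * a2p * bm - (fP : F) * fP' * g = 0 ∧
        symbol fP a1p + symbol fP a2p - symbol fP a1m -
          (symbol fP bp - symbol fP bm) ∈ Lsub L O (3 * t : ℤ) :=
  statement18_general k F res ord ev L t hC O hO P hPS d hd hd1 hd2 fP DP hDPeff hfP fP' DP' hDP'eff
    hfP' a1p a2p a1m ha1p ha2p ha1m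

end
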